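/- Let G be a finite edge-labeled graph with every node having an incoming edge, and suppose nodes u ≠ v satisfy min_u = min_v. Then there exist incoming edges (u', u) and (v', v) with the same label such that min_{u'} = min_{v'}. -/

import Mathlib

/-!
If `c · β` is the minimal string of `u`, read along an edge `(u', u)` labelled `c`, then `β` is
the minimal string of `u'`: any smaller string readable from `u'` could be prefixed by `c` to beat
`min_u`. Hence `min_{u'}` is the tail of `min_u`, `min_{v'}` the tail of `min_v`, and the two
edges carry the same first letter.
-/

open scoped Classical

/-- Length of the longest common prefix of two infinite strings, valued in `ℕ∞`. -/
noncomputable def lcp {A : Type*} (α β : ℕ → A) : ℕ∞ :=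
  ⨆ k : {k : ℕ // ∀ i < k, α i = β i}, (k : ℕ∞)

/-- Strict lexicographic order on infinite strings. -/
def LexLt {A : Type*} [LinearOrder A] (α β : ℕ → A) : Prop :=
  ∃ i, (∀ j < i, α j = β j) ∧ α i < β i

/-- Non-strict lexicographic order on infinite strings. -/
def LexLe {A : Type*} [LinearOrder A] (α β : ℕ → A) : Prop :=
  LexLt α β ∨ α = β

/-- Prepend a character to an infinite string. -/
def consStr {A : Type*} (c : A) (α : ℕ → A) : ℕ → A :=
  fun n => Nat.casesOn n c α

/-- `α` can be read from `u` following edges of the labeled graph `edge` backward. -/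
def ReadableBackward {V A : Type*} (edge : V → V → A → Prop) (u : V) (α : ℕ → A) : Prop :=
  ∃ v : ℕ → V, v 0 = u ∧ ∀ k, edge (v (k + 1)) (v k) (α k)

/-- `α` is the lexicographically smallest infinite string readable backward from `u`. -/
def IsMinStr {V A : Type*} [LinearOrder A] (edge : V → V → A → Prop) (u : V) (α : ℕ → A) : Prop :=
  ReadableBackward edge u α ∧ ∀ β, ReadableBackward edge u β → LexLe α β

/-- `α` is the lexicographically largest infinite string readable backward from `u`. -/
def IsMaxStr {V A : Type*} [LinearOrder A] (edge : V → V → A → Prop) (u : V) (α : ℕ → A) : Prop :=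
  ReadableBackward edge u α ∧ ∀ β, ReadableBackward edge u β → LexLe β α

/-- A finite string occurs as the label of a (forward) walk in the graph. -/
def Occurs {V A : Type*} (edge : V → V → A → Prop) (s : List A) : Prop :=
  ∃ v : ℕ → V, ∀ k, (h : k < s.length) → edge (v k) (v (k + 1)) (s.get ⟨k, h⟩)

theorem LexLe.antisymm {A : Type*} [LinearOrder A] {α β : ℕ → A}
    (hαβ : LexLe α β) (hβα : LexLe β α) : α = β := by
  rcases hαβ with ⟨i, hpre, hi⟩ | h
  · rcases hβα with ⟨j, hpre', hj⟩ | h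
    · rcases lt_trichotomy i j with h | rfl | h
      · exact absurd (hpre' i h).symm hi.ne
      · exact absurd hj hi.asymm
      · exact absurd (hpre j h) hj.ne'
    · exact h.symm
  · exact h

theorem LexLe.of_consStr {A : Type*} [LinearOrder A] {c : A} {α β : ℕ → A}
    (h : LexLe (consStr c α) (consStr c β)) : LexLe α β := by
  rcases h with ⟨_ | i, hpre, hi⟩ | h
  · exact absurd hi (lt_irrefl c)
  · exact Or.inl ⟨i, fun j hj => hpre (j + 1) (by omega), hi⟩
  · exact Or.inr (funext fun n => congrFun h (n + 1))

theorem consStr_head_tail {A : Type*} (α : ℕ → A) :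
    consStr (α 0) (fun n => α (n + 1)) = α := by
  funext n; cases n <;> rfl

section Readable

variable {V A : Type*} {edge : V → V → A → Prop}

theorem ReadableBackward.consStr {u u' : V} {c : A} {α : ℕ → A}
    (he : edge u' u c) (h : ReadableBackward edge u' α) :
    ReadableBackward edge u (consStr c α) := by
  obtain ⟨w, hw0, hw⟩ := h
  refine ⟨fun n => Nat.casesOn n u w, rfl, fun k => ?_⟩
  cases k with
  | zero => simpa [_root_.consStr, hw0] using he
  | succ k => exact hw k

theorem IsMinStr.unique [LinearOrder A] {u : V} {α β : ℕ → A}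
    (hα : IsMinStr edge u α) (hβ : IsMinStr edge u β) : α = β :=
  (hα.2 β hβ.1).antisymm (hβ.2 α hα.1)

theorem IsMinStr.exists_tail [LinearOrder A] {u : V} {α : ℕ → A}
    (hα : IsMinStr edge u α) :
    ∃ u', edge u' u (α 0) ∧ IsMinStr edge u' (fun n => α (n + 1)) := by
  obtain ⟨⟨w, hw0, hw⟩, hmin⟩ := hα
  have hedge : edge (w 1) u (α 0) := hw0 ▸ hw 0
  refine ⟨w 1, hedge, ⟨fun k => w (k + 1), rfl, fun k => hw (k + 1)⟩, fun β hβ => ?_⟩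
  apply LexLe.of_consStr (c := α 0)
  rw [consStr_head_tail]
  exact hmin _ (hβ.consStr hedge)

end Readable

theorem min_eq_propagates_general {V A : Type*} [LinearOrder A]
    (edge : V → V → A → Prop)
    (m : V → (ℕ → A)) (hm : ∀ u, IsMinStr edge u (m u))
    (u v : V) (heq : m u = m v) :
    ∃ (u' v' : V) (c : A), edge u' u c ∧ edge v' v c ∧ m u' = m v' := by
  obtain ⟨u', heu, hu'⟩ := (hm u).exists_tail
  obtain ⟨v', hev, hv'⟩ := (hm v).exists_tail
  refine ⟨u', v', m u 0, heu, heq ▸ hev, ?_⟩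
  rw [(hm u').unique hu', (hm v').unique hv', heq]

/-- if min_u = min_v for u ≠ v, then u and v have incoming edges with the
same label from nodes u', v' with min_{u'} = min_{v'}. -/
theorem min_eq_propagates {V A : Type*} [Fintype V] [Fintype A] [Nonempty A] [LinearOrder A]
    (edge : V → V → A → Prop) (hin : ∀ u : V, ∃ v c, edge v u c)
    (m : V → (ℕ → A)) (hm : ∀ u, IsMinStr edge u (m u))
    (u v : V) (huv : u ≠ v) (heq : m u = m v) :
    ∃ (u' v' : V) (c : A), edge u' u c ∧ edge v' v c ∧ m u' = m v' :=
  min_eq_propagates_general edge m hm u v heq
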